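/- Let ψ : (α,β) → (0,∞) be a second continuous function, with associated spaces C_ψ^{(∞)} defined using Y := ψ∂_t. If φ/ψ extends to a function on [α,β] belonging to C_ψ^{(∞)} and ψ/φ extends to a function on [α,β] belonging to C_φ^{(∞)}, then C_φ^{(∞)} = C_ψ^{(∞)}. -/

import Mathlib

open Real Set Filter Topology

/-- The open interval `(α, β)` of real numbers, where `α β` are extended reals. -/
def EI (α β : EReal) : Set ℝ := {x : ℝ | α < (x : EReal) ∧ (x : EReal) < β}

/-- `u : ℝ → ℝ` (thought of as a function on `(α, β)`) extends to a continuous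
function on `[α, β] ⊆ EReal`. -/
def ContExt (α β : EReal) (u : ℝ → ℝ) : Prop :=
  ∃ g : EReal → ℝ, ContinuousOn g (Set.Icc α β) ∧
    ∀ x : ℝ, x ∈ EI α β → g (x : EReal) = u x

/-- The operator `X u := φ · u′`. -/
noncomputable def Xop (φ u : ℝ → ℝ) : ℝ → ℝ := fun x => φ x * deriv u x

/-- The iterates `X^k u`. -/
noncomputable def Xiter (φ : ℝ → ℝ) : ℕ → (ℝ → ℝ) → (ℝ → ℝ)
  | 0, u => u
  | n + 1, u => Xop φ (Xiter φ n u)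

/-- The space `C_φ^{(n)}`: inductively, `C_φ^{(0)}` consists of the functions having a
continuous extension to `[α, β]`, and `u ∈ C_φ^{(n+1)}` iff `u ∈ C_φ^{(n)}`, `X^n u` is
differentiable on `(α, β)`, and `X^{n+1} u` extends to a continuous function on `[α, β]`. -/
def CN (α β : EReal) (φ : ℝ → ℝ) : ℕ → Set (ℝ → ℝ)
  | 0 => {u | ContExt α β u}
  | n + 1 => {u | u ∈ CN α β φ n ∧
      (∀ x ∈ EI α β, DifferentiableAt ℝ (Xiter φ n u) x) ∧
      ContExt α β (Xiter φ (n + 1) u)}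

/-- The space `C_φ^{(∞)} := ⋂ₙ C_φ^{(n)}`. -/
def Cinf (α β : EReal) (φ : ℝ → ℝ) : Set (ℝ → ℝ) := ⋂ n : ℕ, CN α β φ n

/-- The spaces `C_φ^{(n)}` for `n ∈ ℤ₊ ∪ {∞}`. -/
def CNE (α β : EReal) (φ : ℝ → ℝ) (n : ℕ∞) : Set (ℝ → ℝ) :=
  WithTop.recTopCoe (Cinf α β φ) (fun k => CN α β φ k) n

/-! The space `C_w^{(∞)}` is characterised by a one-step recursion: `u` lies in it iff `u`
extends continuously, is differentiable on `(α, β)`, and `w · u′` lies in it again. From this,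
induction on the order and the Leibniz rule show that `C_w^{(∞)}` is closed under products.
If `φ = q ψ` with `q ∈ C_ψ^{(∞)}`, then `φ u′ = q · (ψ u′)` is a product of elements of
`C_ψ^{(∞)}`, so the same induction gives `C_ψ^{(∞)} ⊆ C_φ^{(∞)}`; the hypotheses are symmetric
in `φ` and `ψ`. -/

lemma isOpen_EI (α β : EReal) : IsOpen (EI α β) :=
  isOpen_Ioo.preimage continuous_coe_real_ereal

lemma ContExt.congr {α β : EReal} {u v : ℝ → ℝ} (hv : ContExt α β v)
    (h : EqOn u v (EI α β)) : ContExt α β u := by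
  obtain ⟨g, hg, hgv⟩ := hv
  exact ⟨g, hg, fun x hx => (hgv x hx).trans (h hx).symm⟩

lemma ContExt.add {α β : EReal} {u v : ℝ → ℝ} (hu : ContExt α β u) (hv : ContExt α β v) :
    ContExt α β (u + v) := by
  obtain ⟨g, hg, hgu⟩ := hu
  obtain ⟨h, hh, hhv⟩ := hv
  exact ⟨g + h, hg.add hh, fun x hx => by simp [hgu x hx, hhv x hx]⟩

lemma ContExt.mul {α β : EReal} {u v : ℝ → ℝ} (hu : ContExt α β u) (hv : ContExt α β v) :
    ContExt α β (u * v) := by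
  obtain ⟨g, hg, hgu⟩ := hu
  obtain ⟨h, hh, hhv⟩ := hv
  exact ⟨g * h, hg.mul hh, fun x hx => by simp [hgu x hx, hhv x hx]⟩

lemma Xop_congr {α β : EReal} (w : ℝ → ℝ) {u v : ℝ → ℝ} (h : EqOn u v (EI α β)) :
    EqOn (Xop w u) (Xop w v) (EI α β) := fun x hx => by
  rw [Xop, Xop, (h.eventuallyEq_of_mem ((isOpen_EI α β).mem_nhds hx)).deriv_eq]

lemma Xop_add {α β : EReal} (w : ℝ → ℝ) {u v : ℝ → ℝ}
    (hu : ∀ x ∈ EI α β, DifferentiableAt ℝ u x) (hv : ∀ x ∈ EI α β, DifferentiableAt ℝ v x) :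
    EqOn (Xop w (u + v)) (Xop w u + Xop w v) (EI α β) := fun x hx => by
  simp only [Xop, Pi.add_apply, deriv_add (hu x hx) (hv x hx)]
  ring

lemma Xop_mul {α β : EReal} (w : ℝ → ℝ) {u v : ℝ → ℝ}
    (hu : ∀ x ∈ EI α β, DifferentiableAt ℝ u x) (hv : ∀ x ∈ EI α β, DifferentiableAt ℝ v x) :
    EqOn (Xop w (u * v)) (Xop w u * v + u * Xop w v) (EI α β) := fun x hx => by
  simp only [Xop, Pi.add_apply, Pi.mul_apply, deriv_mul (hu x hx) (hv x hx)]
  ring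

lemma Xiter_succ' (w u : ℝ → ℝ) (n : ℕ) : Xiter w (n + 1) u = Xiter w n (Xop w u) := by
  induction n with
  | zero => rfl
  | succ n ih => exact congrArg (Xop w) ih

lemma mem_CN_succ_iff {α β : EReal} {w u : ℝ → ℝ} {n : ℕ} :
    u ∈ CN α β w (n + 1) ↔
      ContExt α β u ∧ (∀ x ∈ EI α β, DifferentiableAt ℝ u x) ∧ Xop w u ∈ CN α β w n := by
  induction n generalizing u with
  | zero => exact Iff.rfl
  | succ n ih =>
    change (u ∈ CN α β w (n + 1) ∧ _ ∧ _) ↔ _ ∧ _ ∧ (Xop w u ∈ CN α β w n ∧ _ ∧ _)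
    rw [ih, Xiter_succ', Xiter_succ' w u (n + 1)]
    tauto

lemma mem_CN_of_eqOn {α β : EReal} {w : ℝ → ℝ} {n : ℕ} {u v : ℝ → ℝ} (hv : v ∈ CN α β w n)
    (h : EqOn u v (EI α β)) : u ∈ CN α β w n := by
  induction n generalizing u v with
  | zero => exact ContExt.congr hv h
  | succ n ih =>
    obtain ⟨hvc, hvd, hvX⟩ := mem_CN_succ_iff.1 hv
    refine mem_CN_succ_iff.2 ⟨hvc.congr h, fun x hx => ?_, ih hvX (Xop_congr w h)⟩
    exact (h.eventuallyEq_of_mem ((isOpen_EI α β).mem_nhds hx)).differentiableAt_iff.2 (hvd x hx)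

lemma add_mem_CN {α β : EReal} {w : ℝ → ℝ} {n : ℕ} {u v : ℝ → ℝ} (hu : u ∈ CN α β w n)
    (hv : v ∈ CN α β w n) : u + v ∈ CN α β w n := by
  induction n generalizing u v with
  | zero => exact ContExt.add hu hv
  | succ n ih =>
    obtain ⟨huc, hud, huX⟩ := mem_CN_succ_iff.1 hu
    obtain ⟨hvc, hvd, hvX⟩ := mem_CN_succ_iff.1 hv
    exact mem_CN_succ_iff.2 ⟨huc.add hvc, fun x hx => (hud x hx).add (hvd x hx),
      mem_CN_of_eqOn (ih huX hvX) (Xop_add w hud hvd)⟩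

lemma mem_Cinf_iff {α β : EReal} {w u : ℝ → ℝ} :
    u ∈ Cinf α β w ↔
      ContExt α β u ∧ (∀ x ∈ EI α β, DifferentiableAt ℝ u x) ∧ Xop w u ∈ Cinf α β w := by
  simp only [Cinf, mem_iInter]
  constructor
  · intro hu
    obtain ⟨huc, hud, -⟩ := mem_CN_succ_iff.1 (hu 1)
    exact ⟨huc, hud, fun n => (mem_CN_succ_iff.1 (hu (n + 1))).2.2⟩
  · rintro ⟨huc, hud, huX⟩ (_ | n)
    · exact huc
    · exact mem_CN_succ_iff.2 ⟨huc, hud, huX n⟩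

lemma mul_mem_Cinf {α β : EReal} {w u v : ℝ → ℝ} (hu : u ∈ Cinf α β w)
    (hv : v ∈ Cinf α β w) : u * v ∈ Cinf α β w := by
  suffices ∀ n, ∀ u ∈ Cinf α β w, ∀ v ∈ Cinf α β w, u * v ∈ CN α β w n from
    mem_iInter.2 fun n => this n u hu v hv
  intro n
  induction n with
  | zero => exact fun u hu v hv => (mem_iInter.1 hu 0).mul (mem_iInter.1 hv 0)
  | succ n ih =>
    intro u hu v hv
    obtain ⟨huc, hud, huX⟩ := mem_Cinf_iff.1 hu
    obtain ⟨hvc, hvd, hvX⟩ := mem_Cinf_iff.1 hv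
    exact mem_CN_succ_iff.2 ⟨huc.mul hvc, fun x hx => (hud x hx).mul (hvd x hx),
      mem_CN_of_eqOn (add_mem_CN (ih _ huX v hv) (ih u hu _ hvX)) (Xop_mul w hud hvd)⟩

lemma Cinf_subset_of_eqOn_mul {α β : EReal} {φ ψ q : ℝ → ℝ} (hq : q ∈ Cinf α β ψ)
    (hφ : EqOn φ (q * ψ) (EI α β)) : Cinf α β ψ ⊆ Cinf α β φ := by
  suffices ∀ n, ∀ u ∈ Cinf α β ψ, u ∈ CN α β φ n from
    fun u hu => mem_iInter.2 fun n => this n u hu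
  intro n
  induction n with
  | zero => exact fun u hu => mem_iInter.1 hu 0
  | succ n ih =>
    intro u hu
    obtain ⟨huc, hud, huX⟩ := mem_Cinf_iff.1 hu
    have hXφ : EqOn (Xop φ u) (q * Xop ψ u) (EI α β) := fun x hx => by
      simp only [Xop, Pi.mul_apply, hφ hx]
      ring
    exact mem_CN_succ_iff.2 ⟨huc, hud, mem_CN_of_eqOn (ih _ (mul_mem_Cinf hq huX)) hXφ⟩

theorem Cphi_eq_Cpsi_general (α β : EReal) (φ : ℝ → ℝ)
    (hφpos : ∀ x ∈ EI α β, 0 < φ x)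
    (ψ : ℝ → ℝ) (hψpos : ∀ x ∈ EI α β, 0 < ψ x)
    (q : ℝ → ℝ) (hq : ∀ x ∈ EI α β, q x = φ x / ψ x) (hqmem : q ∈ Cinf α β ψ)
    (p : ℝ → ℝ) (hp : ∀ x ∈ EI α β, p x = ψ x / φ x) (hpmem : p ∈ Cinf α β φ) :
    Cinf α β φ = Cinf α β ψ := by
  have hφ : EqOn φ (q * ψ) (EI α β) := fun x hx => by
    rw [Pi.mul_apply, hq x hx, div_mul_cancel₀ _ (hψpos x hx).ne']
  have hψ : EqOn ψ (p * φ) (EI α β) := fun x hx => by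
    rw [Pi.mul_apply, hp x hx, div_mul_cancel₀ _ (hφpos x hx).ne']
  exact (Cinf_subset_of_eqOn_mul hpmem hψ).antisymm (Cinf_subset_of_eqOn_mul hqmem hφ)

/-- if `ψ : (α,β) → (0,∞)` is continuous, `φ/ψ` extends to a function on
`[α,β]` belonging to `C_ψ^{(∞)}`, and `ψ/φ` extends to a function on `[α,β]` belonging
to `C_φ^{(∞)}`, then `C_φ^{(∞)} = C_ψ^{(∞)}`. -/
theorem Cphi_eq_Cpsi (α β : EReal) (hαβ : α < β) (φ : ℝ → ℝ)
    (hφc : ContinuousOn φ (EI α β)) (hφpos : ∀ x ∈ EI α β, 0 < φ x)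
    (ψ : ℝ → ℝ) (hψc : ContinuousOn ψ (EI α β)) (hψpos : ∀ x ∈ EI α β, 0 < ψ x)
    (q : ℝ → ℝ) (hq : ∀ x ∈ EI α β, q x = φ x / ψ x) (hqmem : q ∈ Cinf α β ψ)
    (p : ℝ → ℝ) (hp : ∀ x ∈ EI α β, p x = ψ x / φ x) (hpmem : p ∈ Cinf α β φ) :
    Cinf α β φ = Cinf α β ψ :=
  Cphi_eq_Cpsi_general α β φ hφpos ψ hψpos q hq hqmem p hp hpmem
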